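/- Let m ≥ 2 be even, let λ = e^{2πi/m} (a primitive m-th root of unity), and let i be a positive integer with gcd(i, m) = 1. Let A = ℂ⟨u,v,t⟩/(u·v − v·u, t·u − v·t, t·v − λ^i·u·t). Let τ : A → A be the ℂ-algebra endomorphism determined by τ(u) = u, τ(v) = v, τ(t) = −t. Let S₊, S₋ : A → A be any ℂ-linear maps satisfying, for all nonnegative integers p, q, r: S₊(u^p·v^q·t^{2r}) = u^q·v^p·t^{2r} and S₋(u^p·v^q·t^{2r}) = λ^{i(p−q)}·u^q·v^p·t^{2r} (where λ^{i(p−q)} is the integer power of λ, possibly with negative exponent). Then the set { F ∈ A : τ(F) = F, S₊(F) = F, S₋(F) = F } equals the ℂ-subalgebra of A generated by u·v, u^m + v^m, and t². -/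

import Mathlib

/-! Theorem 6.9 of Ferraro–Kirkman–Moore–Won (case `A⁻_{1,ε}`): the fixed ring of
the inner-faithful action of Masuoka's Hopf algebra `𝓐_{4m}`, `m` even, on the Ore
extension `A = ℂ[u,v][t;σ]` with `σ(u) = v`, `σ(v) = λ^i u`, is generated by
`uv`, `u^m + v^m` and `t²`. -/

noncomputable section

open FreeAlgebra

/-- The relations `uv = vu`, `tu = vt`, `tv = μ·ut` on `ℂ⟨u,v,t⟩`, i.e. the quotient
by the two-sided ideal generated by `uv - vu`, `tu - vt` and `tv - μ·ut`
(here `0 ↦ u`, `1 ↦ v`, `2 ↦ t` and `μ = λ^i`). -/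
inductive Stmt18.Rel (μ : ℂ) : FreeAlgebra ℂ (Fin 3) → FreeAlgebra ℂ (Fin 3) → Prop
  | comm : Stmt18.Rel μ (ι ℂ 0 * ι ℂ 1) (ι ℂ 1 * ι ℂ 0)
  | tu : Stmt18.Rel μ (ι ℂ 2 * ι ℂ 0) (ι ℂ 1 * ι ℂ 2)
  | tv : Stmt18.Rel μ (ι ℂ 2 * ι ℂ 1) (μ • (ι ℂ 0 * ι ℂ 2))

/-- `A = ℂ⟨u,v,t⟩/(uv - vu, tu - vt, tv - λ^i ut)`. -/
abbrev Stmt18.A (μ : ℂ) := RingQuot (Stmt18.Rel μ)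

def Stmt18.u (μ : ℂ) : Stmt18.A μ := RingQuot.mkAlgHom ℂ (Stmt18.Rel μ) (ι ℂ 0)
def Stmt18.v (μ : ℂ) : Stmt18.A μ := RingQuot.mkAlgHom ℂ (Stmt18.Rel μ) (ι ℂ 1)
def Stmt18.t (μ : ℂ) : Stmt18.A μ := RingQuot.mkAlgHom ℂ (Stmt18.Rel μ) (ι ℂ 2)

/-!
The monomials `u^p v^q t^k` form a basis of `A` (they span since `u`, `v`, `t` move through
them, and are independent since the left regular representation maps them to distinct unit
vectors). The sign automorphism `τ` acts on them by `(-1)^k`, so an invariant `F` only involves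
even powers of `t`; on these `S₊` swaps `p` and `q`, and `S₋` does the same up to the factor
`λ^{i(p-q)}`, which is `1` exactly when `m ∣ p - q` since `λ^i` is a primitive `m`-th root of
unity. Hence `2F = F + S₊ F` is a combination of the symmetric monomials
`u^p v^q t^{2r} + u^q v^p t^{2r}` with `m ∣ p - q`. Their span is the subalgebra generated by
`uv`, `u^m + v^m`, `t²`: it is closed under products because `t²` skew-commutes with `u` and `v`,
and for `p = q + jm` the symmetric monomial is `(uv)^q (u^{jm} + v^{jm}) t^{2r}`, where
`u^{jm} + v^{jm}` is a polynomial in `u^m + v^m` and `(uv)^m`.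
-/

open Module

theorem Module.Basis.repr_apply_of_apply_eq_smul {ι R M M' : Type*} [Semiring R]
    [AddCommMonoid M] [Module R M] [AddCommMonoid M'] [Module R M']
    (b : Basis ι R M) (b' : Basis ι R M') {f : M →ₗ[R] M'} {σ : ι → ι}
    (hσ : Function.Injective σ) {w : ι → R} {x : M}
    (hf : ∀ s ∈ (b.repr x).support, f (b s) = w s • b' (σ s)) (s : ι) :
    b'.repr (f x) (σ s) = b.repr x s * w s := by
  have hfx : f x = (b.repr x).sum fun s c => (c * w s) • b' (σ s) := by
    conv_lhs => rw [← b.linearCombination_repr x, Finsupp.linearCombination_apply, map_finsuppSum]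
    exact Finsupp.sum_congr fun s hs => by rw [map_smul, hf s hs, smul_smul]
  rw [hfx, map_finsuppSum, Finsupp.sum_apply, Finsupp.sum_eq_single s]
  · simp
  · intro s' _ hs'
    simp [hσ.ne hs']
  · simp

theorem SemiconjBy.pow_left_of_eq_smul {R A : Type*} [Monoid R] [Monoid A] [MulAction R A]
    [IsScalarTower R A A] [SMulCommClass R A A] {a x : A} {c : R} (h : SemiconjBy a x (c • x))
    (n : ℕ) : SemiconjBy (a ^ n) x (c ^ n • x) := by
  induction n with
  | zero => simp
  | succ n ih =>
    rw [pow_succ, pow_succ', ← smul_smul]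
    exact (ih.smul_right c).mul_left h

theorem Commute.pow_add_pow_mem {R S : Type*} [Ring R] [SetLike S R] [SubringClass S R] (s : S)
    {x y : R} (h : Commute x y) (hadd : x + y ∈ s) (hmul : x * y ∈ s) (n : ℕ) :
    x ^ n + y ^ n ∈ s := by
  induction n using Nat.strong_induction_on with
  | _ n ih =>
    match n with
    | 0 => simpa using add_mem (one_mem s) (one_mem s)
    | 1 => simpa using hadd
    | n + 2 =>
      have hyx : y * x ^ (n + 1) = x * y * x ^ n := by rw [pow_succ', ← mul_assoc, h.eq]
      have hxy : x * y ^ (n + 1) = x * y * y ^ n := by rw [pow_succ', mul_assoc]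
      have hrec : x ^ (n + 2) + y ^ (n + 2) =
          (x + y) * (x ^ (n + 1) + y ^ (n + 1)) - x * y * (x ^ n + y ^ n) := by
        rw [mul_add, add_mul, add_mul, hyx, hxy, ← pow_succ', ← pow_succ', mul_add]
        abel
      rw [hrec]
      exact sub_mem (mul_mem hadd (ih _ (by omega))) (mul_mem hmul (ih _ (by omega)))

theorem IsPrimitiveRoot.zpow_natCast_mul_eq_one_iff {G : Type*} [DivisionCommMonoid G] {ζ : G}
    {m i : ℕ} (hζ : IsPrimitiveRoot ζ m) (hi : i.Coprime m) (n : ℤ) :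
    ζ ^ ((i : ℤ) * n) = 1 ↔ (m : ℤ) ∣ n := by
  rw [zpow_mul, zpow_natCast, (hζ.pow_of_coprime i hi).zpow_eq_one_iff_dvd]

namespace Stmt18

section Monomials

variable (μ : ℂ)

theorem commute_u_v : Commute (u μ) (v μ) := by
  show u μ * v μ = v μ * u μ
  simpa [u, v] using RingQuot.mkAlgHom_rel ℂ (Rel.comm (μ := μ))

theorem semiconjBy_t_u : SemiconjBy (t μ) (u μ) (v μ) := by
  show t μ * u μ = v μ * t μ
  simpa [u, v, t] using RingQuot.mkAlgHom_rel ℂ (Rel.tu (μ := μ))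

theorem semiconjBy_t_v : SemiconjBy (t μ) (v μ) (μ • u μ) := by
  rw [SemiconjBy, smul_mul_assoc]
  simpa [u, v, t] using RingQuot.mkAlgHom_rel ℂ (Rel.tv (μ := μ))

theorem semiconjBy_t_sq_u : SemiconjBy (t μ ^ 2) (u μ) (μ • u μ) := by
  rw [pow_two]
  exact (semiconjBy_t_v μ).mul_left (semiconjBy_t_u μ)

theorem semiconjBy_t_sq_v : SemiconjBy (t μ ^ 2) (v μ) (μ • v μ) := by
  rw [pow_two]
  exact ((semiconjBy_t_u μ).smul_right μ).mul_left (semiconjBy_t_v μ)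

theorem t_pow_two_mul_mul_comm (r p q : ℕ) :
    t μ ^ (2 * r) * (u μ ^ p * v μ ^ q) =
      μ ^ (r * (p + q)) • (u μ ^ p * v μ ^ q * t μ ^ (2 * r)) := by
  have hu := (((semiconjBy_t_sq_u μ).pow_left_of_eq_smul r).pow_right p).eq
  have hv := (((semiconjBy_t_sq_v μ).pow_left_of_eq_smul r).pow_right q).eq
  rw [smul_pow, ← pow_mul, ← pow_mul] at hu hv
  rw [← mul_assoc, hu, smul_mul_assoc, smul_mul_assoc, mul_assoc, hv, smul_mul_assoc,
    mul_smul_comm, smul_smul, ← pow_add, ← mul_add, ← mul_assoc]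

def mono (s : ℕ × ℕ × ℕ) : A μ := u μ ^ s.1 * v μ ^ s.2.1 * t μ ^ s.2.2

theorem mono_mul_mono (p q r p' q' r' : ℕ) :
    mono μ (p, q, 2 * r) * mono μ (p', q', 2 * r') =
      μ ^ (r * (p' + q')) • mono μ (p + p', q + q', 2 * (r + r')) := by
  have huv : u μ ^ p * v μ ^ q * (u μ ^ p' * v μ ^ q') = u μ ^ (p + p') * v μ ^ (q + q') := by
    rw [((commute_u_v μ).pow_pow p' q).symm.mul_mul_mul_comm, pow_add, pow_add]
  calc mono μ (p, q, 2 * r) * mono μ (p', q', 2 * r')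
      = u μ ^ p * v μ ^ q * (t μ ^ (2 * r) * (u μ ^ p' * v μ ^ q')) * t μ ^ (2 * r') := by
        simp only [mono, mul_assoc]
    _ = μ ^ (r * (p' + q')) • mono μ (p + p', q + q', 2 * (r + r')) := by
        rw [t_pow_two_mul_mul_comm, mul_smul_comm, smul_mul_assoc, ← mul_assoc, huv, mul_assoc,
          ← pow_add, ← mul_add]
        rfl

theorem u_mul_mono (s : ℕ × ℕ × ℕ) : u μ * mono μ s = mono μ (s.1 + 1, s.2.1, s.2.2) := by
  rw [mono, mono, ← mul_assoc, ← mul_assoc, ← pow_succ']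

theorem v_mul_mono (s : ℕ × ℕ × ℕ) : v μ * mono μ s = mono μ (s.1, s.2.1 + 1, s.2.2) := by
  rw [mono, mono, ← mul_assoc, ← mul_assoc, ((commute_u_v μ).symm.pow_right s.1).eq,
    mul_assoc (u μ ^ s.1), ← pow_succ']

theorem t_mul_mono (s : ℕ × ℕ × ℕ) :
    t μ * mono μ s = μ ^ s.2.1 • mono μ (s.2.1, s.1, s.2.2 + 1) := by
  obtain ⟨p, q, k⟩ := s
  calc t μ * mono μ (p, q, k) = v μ ^ p * (t μ * v μ ^ q) * t μ ^ k := by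
        rw [mono, ← mul_assoc, ← mul_assoc, ((semiconjBy_t_u μ).pow_right p).eq,
          mul_assoc (v μ ^ p)]
    _ = μ ^ q • (u μ ^ q * v μ ^ p * (t μ * t μ ^ k)) := by
        rw [((semiconjBy_t_v μ).pow_right q).eq, smul_pow, smul_mul_assoc, mul_smul_comm,
          smul_mul_assoc, ← mul_assoc, ((commute_u_v μ).pow_pow q p).symm.eq, mul_assoc]
    _ = μ ^ q • mono μ (q, p, k + 1) := by rw [← pow_succ']; rfl

end Monomials

section RegularRepresentation

-- Left multiplication by `u`, `v`, `t` on coefficient vectors in the monomials `u^p v^q t^k`,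
-- read off from `u_mul_mono`, `v_mul_mono`, `t_mul_mono`.
def regU : Module.End ℂ ((ℕ × ℕ × ℕ) →₀ ℂ) :=
  Finsupp.lsum ℂ fun s => Finsupp.lsingle (s.1 + 1, s.2.1, s.2.2)

def regV : Module.End ℂ ((ℕ × ℕ × ℕ) →₀ ℂ) :=
  Finsupp.lsum ℂ fun s => Finsupp.lsingle (s.1, s.2.1 + 1, s.2.2)

def regT (μ : ℂ) : Module.End ℂ ((ℕ × ℕ × ℕ) →₀ ℂ) :=
  Finsupp.lsum ℂ fun s => μ ^ s.2.1 • Finsupp.lsingle (s.2.1, s.1, s.2.2 + 1)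

@[simp] theorem regU_single (s : ℕ × ℕ × ℕ) (c : ℂ) :
    regU (Finsupp.single s c) = Finsupp.single (s.1 + 1, s.2.1, s.2.2) c := by
  simp [regU]

@[simp] theorem regV_single (s : ℕ × ℕ × ℕ) (c : ℂ) :
    regV (Finsupp.single s c) = Finsupp.single (s.1, s.2.1 + 1, s.2.2) c := by
  simp [regV]

@[simp] theorem regT_single (μ : ℂ) (s : ℕ × ℕ × ℕ) (c : ℂ) :
    regT μ (Finsupp.single s c) = μ ^ s.2.1 • Finsupp.single (s.2.1, s.1, s.2.2 + 1) c := by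
  simp [regT]

theorem regU_pow_single (p : ℕ) (s : ℕ × ℕ × ℕ) (c : ℂ) :
    (regU ^ p) (Finsupp.single s c) = Finsupp.single (s.1 + p, s.2.1, s.2.2) c := by
  induction p with
  | zero => simp
  | succ p ih => rw [pow_succ', Module.End.mul_apply, ih, regU_single, ← add_assoc]

theorem regV_pow_single (q : ℕ) (s : ℕ × ℕ × ℕ) (c : ℂ) :
    (regV ^ q) (Finsupp.single s c) = Finsupp.single (s.1, s.2.1 + q, s.2.2) c := by
  induction q with
  | zero => simp
  | succ q ih => rw [pow_succ', Module.End.mul_apply, ih, regV_single, ← add_assoc]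

theorem regT_pow_single (μ : ℂ) (k j : ℕ) :
    (regT μ ^ k) (Finsupp.single (0, 0, j) 1) = Finsupp.single (0, 0, j + k) 1 := by
  induction k with
  | zero => simp
  | succ k ih =>
    rw [pow_succ', Module.End.mul_apply, ih, regT_single]
    simp [← add_assoc]

theorem freeRegRep_rel {μ : ℂ} {a b : FreeAlgebra ℂ (Fin 3)} (h : Rel μ a b) :
    FreeAlgebra.lift ℂ ![regU, regV, regT μ] a = FreeAlgebra.lift ℂ ![regU, regV, regT μ] b := by
  cases h <;>
  · simp only [map_mul, map_smul, FreeAlgebra.lift_ι_apply]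
    refine Finsupp.lhom_ext fun s c => ?_
    simp only [Matrix.cons_val, Module.End.mul_apply, LinearMap.smul_apply, regU_single,
      regV_single, regT_single, map_smul, smul_smul, pow_succ']

def regRep (μ : ℂ) : A μ →ₐ[ℂ] Module.End ℂ ((ℕ × ℕ × ℕ) →₀ ℂ) :=
  RingQuot.liftAlgHom ℂ ⟨FreeAlgebra.lift ℂ ![regU, regV, regT μ], fun _ _ => freeRegRep_rel⟩

@[simp] theorem regRep_u (μ : ℂ) : regRep μ (u μ) = regU := by
  simp [regRep, u]

@[simp] theorem regRep_v (μ : ℂ) : regRep μ (v μ) = regV := by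
  simp [regRep, v]

@[simp] theorem regRep_t (μ : ℂ) : regRep μ (t μ) = regT μ := by
  simp [regRep, t]

variable (μ : ℂ)

def coeffs : A μ →ₗ[ℂ] (ℕ × ℕ × ℕ) →₀ ℂ :=
  (LinearMap.applyₗ (Finsupp.single 0 1)).comp (regRep μ).toLinearMap

theorem coeffs_mono (s : ℕ × ℕ × ℕ) : coeffs μ (mono μ s) = Finsupp.single s 1 := by
  obtain ⟨p, q, k⟩ := s
  simp only [coeffs, mono, LinearMap.coe_comp, Function.comp_apply, AlgHom.toLinearMap_apply,
    LinearMap.applyₗ_apply_apply, map_mul, map_pow, regRep_u, regRep_v, regRep_t,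
    Module.End.mul_apply]
  rw [show (0 : ℕ × ℕ × ℕ) = (0, 0, 0) from rfl, regT_pow_single, regV_pow_single, regU_pow_single]
  simp

theorem linearIndependent_mono : LinearIndependent ℂ (mono μ) :=
  LinearIndependent.of_comp (coeffs μ) <| by
    simpa [Function.comp_def, coeffs_mono] using Finsupp.linearIndependent_single_one ℂ _

theorem mul_mem_span_mono (a : A μ) {x : A μ} (hx : x ∈ Submodule.span ℂ (Set.range (mono μ))) :
    a * x ∈ Submodule.span ℂ (Set.range (mono μ)) := by
  obtain ⟨a, rfl⟩ := RingQuot.mkAlgHom_surjective ℂ (Rel μ) a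
  induction a using FreeAlgebra.induction generalizing x with
  | grade0 c => simpa [Algebra.smul_def] using Submodule.smul_mem _ c hx
  | grade1 j =>
    refine Submodule.span_induction (fun y ⟨s, hs⟩ => ?_) (by simp) (fun _ _ _ _ hy hz => ?_)
      (fun c y _ hy => ?_) hx
    · subst hs
      fin_cases j
      · exact Submodule.subset_span ⟨_, (u_mul_mono μ s).symm⟩
      · exact Submodule.subset_span ⟨_, (v_mul_mono μ s).symm⟩
      · exact (t_mul_mono μ s).symm ▸ Submodule.smul_mem _ _ (Submodule.subset_span ⟨_, rfl⟩)
    · rw [mul_add]; exact add_mem hy hz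
    · rw [mul_smul_comm]; exact Submodule.smul_mem _ c hy
  | mul a b ha hb => rw [map_mul, mul_assoc]; exact ha (hb hx)
  | add a b ha hb => rw [map_add, add_mul]; exact add_mem (ha hx) (hb hx)

theorem span_range_mono : Submodule.span ℂ (Set.range (mono μ)) = ⊤ := by
  have hone : (1 : A μ) ∈ Submodule.span ℂ (Set.range (mono μ)) :=
    Submodule.subset_span ⟨0, by simp [mono]⟩
  exact eq_top_iff.2 fun a _ => by simpa using mul_mem_span_mono μ a hone

def monoBasis : Basis (ℕ × ℕ × ℕ) ℂ (A μ) :=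
  Basis.mk (linearIndependent_mono μ) (span_range_mono μ).ge

@[simp] theorem monoBasis_apply (s : ℕ × ℕ × ℕ) : monoBasis μ s = mono μ s :=
  Basis.mk_apply _ _ s

end RegularRepresentation

section SymmetricMonomials

variable (μ : ℂ) (m : ℕ)

def swapUV (s : ℕ × ℕ × ℕ) : ℕ × ℕ × ℕ := (s.2.1, s.1, s.2.2)

theorem swapUV_injective : Function.Injective swapUV :=
  Function.Involutive.injective fun _ => rfl

def IsFixedIndex (s : ℕ × ℕ × ℕ) : Prop := 2 ∣ s.2.2 ∧ (m : ℤ) ∣ s.1 - s.2.1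

theorem IsFixedIndex.swapUV {m : ℕ} {s : ℕ × ℕ × ℕ} (hs : IsFixedIndex m s) :
    IsFixedIndex m (swapUV s) :=
  ⟨hs.1, by simpa [Stmt18.swapUV] using hs.2.neg_right⟩

def symMono (s : ℕ × ℕ × ℕ) : A μ := mono μ s + mono μ (swapUV s)

theorem symMono_swapUV (s : ℕ × ℕ × ℕ) : symMono μ (swapUV s) = symMono μ s :=
  add_comm _ _

theorem symMono_mul_symMono (p q r p' q' r' : ℕ) :
    symMono μ (p, q, 2 * r) * symMono μ (p', q', 2 * r') =
      μ ^ (r * (p' + q')) •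
        (symMono μ (p + p', q + q', 2 * (r + r')) + symMono μ (p + q', q + p', 2 * (r + r'))) := by
  simp only [symMono, swapUV, add_mul, mul_add, mono_mul_mono, add_comm q' p', smul_add]
  abel

def symSpan : Submodule ℂ (A μ) := Submodule.span ℂ (symMono μ '' {s | IsFixedIndex m s})

theorem symMono_mem_symSpan {s : ℕ × ℕ × ℕ} (hs : IsFixedIndex m s) : symMono μ s ∈ symSpan μ m :=
  Submodule.subset_span ⟨s, hs, rfl⟩

theorem mono_diag_mem_symSpan (q r : ℕ) : mono μ (q, q, 2 * r) ∈ symSpan μ m := by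
  have h := symMono_mem_symSpan μ m (s := (q, q, 2 * r)) ⟨dvd_mul_right 2 r, by simp⟩
  rw [symMono, swapUV, ← two_smul ℂ] at h
  simpa using Submodule.smul_mem _ (2⁻¹ : ℂ) h

theorem mul_mem_symSpan {x y : A μ} (hx : x ∈ symSpan μ m) (hy : y ∈ symSpan μ m) :
    x * y ∈ symSpan μ m := by
  refine (Submodule.span_mul_span ℂ _ _).le.trans (Submodule.span_le.2 ?_)
    (Submodule.mul_mem_mul hx hy)
  rintro _ ⟨_, ⟨⟨p, q, _⟩, ⟨⟨r, rfl⟩, hpq⟩, rfl⟩, _, ⟨⟨p', q', _⟩, ⟨⟨r', rfl⟩, hpq'⟩, rfl⟩, rfl⟩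
  dsimp only at hpq hpq' ⊢
  rw [symMono_mul_symMono]
  refine Submodule.smul_mem _ _ (add_mem (symMono_mem_symSpan μ m ⟨dvd_mul_right 2 _, ?_⟩)
    (symMono_mem_symSpan μ m ⟨dvd_mul_right 2 _, ?_⟩))
  · exact (dvd_add hpq hpq').trans (dvd_of_eq (by push_cast; ring))
  · exact (dvd_sub hpq hpq').trans (dvd_of_eq (by push_cast; ring))

abbrev adjoinGens : Subalgebra ℂ (A μ) :=
  Algebra.adjoin ℂ {u μ * v μ, u μ ^ m + v μ ^ m, t μ ^ 2}

theorem adjoinGens_le_symSpan : Subalgebra.toSubmodule (adjoinGens μ m) ≤ symSpan μ m := by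
  have hone : (1 : A μ) ∈ symSpan μ m := by simpa [mono] using mono_diag_mem_symSpan μ m 0 0
  refine Algebra.adjoin_le (S := (symSpan μ m).toSubalgebra hone fun _ _ => mul_mem_symSpan μ m) ?_
  rintro _ (rfl | rfl | rfl)
  · simpa [mono] using mono_diag_mem_symSpan μ m 1 0
  · simpa [symMono, mono, swapUV] using symMono_mem_symSpan μ m (s := (m, 0, 0)) ⟨by simp, by simp⟩
  · simpa [mono] using mono_diag_mem_symSpan μ m 0 1

theorem symMono_mem_adjoinGens_of_le (hm : 0 < m) {s : ℕ × ℕ × ℕ} (hs : IsFixedIndex m s)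
    (hle : s.2.1 ≤ s.1) : symMono μ s ∈ adjoinGens μ m := by
  obtain ⟨p, q, _⟩ := s
  obtain ⟨⟨r, rfl⟩, j, hj⟩ := hs
  dsimp only at hle hj
  obtain ⟨j, rfl⟩ : ∃ j' : ℕ, (j' : ℤ) = j := ⟨j.toNat, Int.toNat_of_nonneg (by nlinarith)⟩
  obtain rfl : p = q + m * j := by omega
  have hpow : u μ ^ (m * j) + v μ ^ (m * j) ∈ adjoinGens μ m := by
    simp only [pow_mul]
    refine ((commute_u_v μ).pow_pow m m).pow_add_pow_mem _ (Algebra.subset_adjoin (by simp))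
      ?_ j
    rw [← (commute_u_v μ).mul_pow]
    exact pow_mem (Algebra.subset_adjoin (by simp)) m
  have hsym : symMono μ (q + m * j, q, 2 * r) =
      (u μ * v μ) ^ q * (u μ ^ (m * j) + v μ ^ (m * j)) * (t μ ^ 2) ^ r := by
    simp only [symMono, mono, swapUV, (commute_u_v μ).mul_pow, mul_add, add_mul, pow_add, ← pow_mul,
      mul_assoc, ((commute_u_v μ).pow_pow (m * j) q).left_comm]
  rw [hsym]
  exact mul_mem (mul_mem (pow_mem (Algebra.subset_adjoin (by simp)) q) hpow)
    (pow_mem (Algebra.subset_adjoin (by simp)) r)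


theorem symMono_mem_adjoinGens (hm : 0 < m) {s : ℕ × ℕ × ℕ} (hs : IsFixedIndex m s) :
    symMono μ s ∈ adjoinGens μ m := by
  rcases le_total s.2.1 s.1 with hle | hle
  · exact symMono_mem_adjoinGens_of_le μ m hm hs hle
  · rw [← symMono_swapUV]
    exact symMono_mem_adjoinGens_of_le μ m hm hs.swapUV hle

theorem symSpan_eq_adjoinGens (hm : 0 < m) :
    symSpan μ m = Subalgebra.toSubmodule (adjoinGens μ m) :=
  le_antisymm (Submodule.span_le.2 fun _ ⟨_, hs, h⟩ => h ▸ symMono_mem_adjoinGens μ m hm hs)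
    (adjoinGens_le_symSpan μ m)

end SymmetricMonomials

section FixedPoints

variable {μ : ℂ} {m : ℕ} {τ : A μ →ₐ[ℂ] A μ} {Sp Sm : A μ →ₗ[ℂ] A μ} {lam : ℂ} {i : ℕ}

theorem map_mono_of_map_t_eq_neg (hτu : τ (u μ) = u μ)
    (hτv : τ (v μ) = v μ) (hτt : τ (t μ) = -t μ) (s : ℕ × ℕ × ℕ) :
    τ (mono μ s) = (-1 : ℂ) ^ s.2.2 • mono μ s := by
  rw [mono, map_mul, map_mul, map_pow, map_pow, map_pow, hτu, hτv, hτt, ← neg_one_smul ℂ (t μ),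
    smul_pow, mul_smul_comm]

theorem two_dvd_of_mem_support (hτu : τ (u μ) = u μ) (hτv : τ (v μ) = v μ)
    (hτt : τ (t μ) = -t μ) {F : A μ} (hF : τ F = F) {s : ℕ × ℕ × ℕ}
    (hs : s ∈ ((monoBasis μ).repr F).support) : 2 ∣ s.2.2 := by
  have h := (monoBasis μ).repr_apply_of_apply_eq_smul (monoBasis μ) (f := τ.toLinearMap) (x := F)
    Function.injective_id (w := fun s => (-1 : ℂ) ^ s.2.2)
    (fun s _ => by simp [map_mono_of_map_t_eq_neg hτu hτv hτt]) s
  rw [AlgHom.toLinearMap_apply, hF, id, eq_comm, mul_eq_left₀ (Finsupp.mem_support_iff.1 hs),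
    neg_one_pow_eq_one_iff_even (by norm_num)] at h
  exact h.two_dvd

theorem repr_swapUV_of_map_eq_self
    (hSp : ∀ p q r : ℕ,
      Sp (u μ ^ p * v μ ^ q * t μ ^ (2 * r)) = u μ ^ q * v μ ^ p * t μ ^ (2 * r))
    {F : A μ} (hF : Sp F = F) (heven : ∀ s ∈ ((monoBasis μ).repr F).support, 2 ∣ s.2.2)
    (s : ℕ × ℕ × ℕ) : (monoBasis μ).repr F (swapUV s) = (monoBasis μ).repr F s := by
  have h := (monoBasis μ).repr_apply_of_apply_eq_smul (monoBasis μ) (f := Sp) (x := F)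
    swapUV_injective (w := 1) (fun s hs => ?_) s
  · rwa [hF, Pi.one_apply, mul_one] at h
  obtain ⟨p, q, _⟩ := s
  obtain ⟨r, rfl⟩ := heven _ hs
  simpa [mono, swapUV] using hSp p q r

theorem dvd_of_mem_support (hζ : IsPrimitiveRoot lam m) (hi : i.Coprime m)
    (hSm : ∀ p q r : ℕ,
      Sm (u μ ^ p * v μ ^ q * t μ ^ (2 * r)) =
        lam ^ ((i : ℤ) * ((p : ℤ) - (q : ℤ))) • (u μ ^ q * v μ ^ p * t μ ^ (2 * r)))
    {F : A μ} (hF : Sm F = F) (heven : ∀ s ∈ ((monoBasis μ).repr F).support, 2 ∣ s.2.2)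
    (hswap : ∀ s, (monoBasis μ).repr F (swapUV s) = (monoBasis μ).repr F s)
    {s : ℕ × ℕ × ℕ} (hs : s ∈ ((monoBasis μ).repr F).support) : (m : ℤ) ∣ s.1 - s.2.1 := by
  have h := (monoBasis μ).repr_apply_of_apply_eq_smul (monoBasis μ) (f := Sm) (x := F)
    swapUV_injective (w := fun s => lam ^ ((i : ℤ) * ((s.1 : ℤ) - s.2.1))) (fun s hs => ?_) s
  · rwa [hF, hswap, eq_comm, mul_eq_left₀ (Finsupp.mem_support_iff.1 hs),
      hζ.zpow_natCast_mul_eq_one_iff hi] at h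
  obtain ⟨p, q, _⟩ := s
  obtain ⟨r, rfl⟩ := heven _ hs
  simpa [mono, swapUV] using hSm p q r

theorem mem_symSpan_of_map_eq_self (hζ : IsPrimitiveRoot lam m) (hi : i.Coprime m)
    (hτu : τ (u μ) = u μ) (hτv : τ (v μ) = v μ) (hτt : τ (t μ) = -t μ)
    (hSp : ∀ p q r : ℕ,
      Sp (u μ ^ p * v μ ^ q * t μ ^ (2 * r)) = u μ ^ q * v μ ^ p * t μ ^ (2 * r))
    (hSm : ∀ p q r : ℕ,
      Sm (u μ ^ p * v μ ^ q * t μ ^ (2 * r)) =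
        lam ^ ((i : ℤ) * ((p : ℤ) - (q : ℤ))) • (u μ ^ q * v μ ^ p * t μ ^ (2 * r)))
    {F : A μ} (hτF : τ F = F) (hSpF : Sp F = F) (hSmF : Sm F = F) : F ∈ symSpan μ m := by
  set c := (monoBasis μ).repr F
  have heven : ∀ s ∈ c.support, 2 ∣ s.2.2 := fun s hs => two_dvd_of_mem_support hτu hτv hτt hτF hs
  have hswap := repr_swapUV_of_map_eq_self hSp hSpF heven
  have hfixed : ∀ s ∈ c.support, IsFixedIndex m s := fun s hs =>
    ⟨heven s hs, dvd_of_mem_support hζ hi hSm hSmF heven hswap hs⟩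
  have hsum : F + Sp F = c.sum fun s a => a • symMono μ s := by
    conv_lhs => rw [← (monoBasis μ).linearCombination_repr F, Finsupp.linearCombination_apply,
      map_finsuppSum, ← Finsupp.sum_add]
    refine Finsupp.sum_congr fun s hs => ?_
    obtain ⟨p, q, _⟩ := s
    obtain ⟨r, rfl⟩ := heven _ hs
    rw [map_smul, monoBasis_apply, ← smul_add, symMono]
    congr 2
    simpa [mono, swapUV] using hSp p q r
  have h2F : (2 : ℂ) • F ∈ symSpan μ m := by
    rw [two_smul]
    nth_rw 2 [← hSpF]
    rw [hsum]
    exact AddSubmonoidClass.finsuppSum_mem _ _ _ fun s hs =>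
      Submodule.smul_mem _ _ (symMono_mem_symSpan μ m (hfixed s (Finsupp.mem_support_iff.2 hs)))
  simpa using Submodule.smul_mem _ (2⁻¹ : ℂ) h2F

theorem map_eq_self_of_mem_symSpan (hζ : IsPrimitiveRoot lam m) (hi : i.Coprime m)
    (hτu : τ (u μ) = u μ) (hτv : τ (v μ) = v μ) (hτt : τ (t μ) = -t μ)
    (hSp : ∀ p q r : ℕ,
      Sp (u μ ^ p * v μ ^ q * t μ ^ (2 * r)) = u μ ^ q * v μ ^ p * t μ ^ (2 * r))
    (hSm : ∀ p q r : ℕ,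
      Sm (u μ ^ p * v μ ^ q * t μ ^ (2 * r)) =
        lam ^ ((i : ℤ) * ((p : ℤ) - (q : ℤ))) • (u μ ^ q * v μ ^ p * t μ ^ (2 * r)))
    {F : A μ} (hF : F ∈ symSpan μ m) : τ F = F ∧ Sp F = F ∧ Sm F = F := by
  have key : ∀ f : A μ →ₗ[ℂ] A μ, (∀ s, IsFixedIndex m s → f (symMono μ s) = symMono μ s) →
      f F = F := fun f hf =>
    LinearMap.eqOn_span' (g := LinearMap.id) (by rintro _ ⟨s, hs, rfl⟩; exact hf s hs) hF
  refine ⟨key τ.toLinearMap ?_, key Sp ?_, key Sm ?_⟩ <;> rintro ⟨p, q, _⟩ ⟨⟨r, rfl⟩, hpq⟩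
  · simp [symMono, map_mono_of_map_t_eq_neg hτu hτv hτt, swapUV, pow_mul]
  · simp [symMono, mono, swapUV, hSp, add_comm]
  · have hqp : (m : ℤ) ∣ q - p := by simpa using hpq.neg_right
    simp [symMono, mono, swapUV, hSm, (hζ.zpow_natCast_mul_eq_one_iff hi _).2, hpq, hqp,
      add_comm]

end FixedPoints

end Stmt18

open Stmt18 in
theorem stmt_18_general (m : ℕ) (hm : 2 ≤ m) (lam : ℂ)
    (hlam : lam = Complex.exp (2 * Real.pi * Complex.I / m))
    (i : ℕ) (hcop : Nat.gcd i m = 1)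
    (μ : ℂ)
    (τ : A μ →ₐ[ℂ] A μ)
    (hτu : τ (u μ) = u μ) (hτv : τ (v μ) = v μ) (hτt : τ (t μ) = -t μ)
    (Sp Sm : A μ →ₗ[ℂ] A μ)
    (hSp : ∀ p q r : ℕ,
      Sp (u μ ^ p * v μ ^ q * t μ ^ (2 * r)) = u μ ^ q * v μ ^ p * t μ ^ (2 * r))
    (hSm : ∀ p q r : ℕ,
      Sm (u μ ^ p * v μ ^ q * t μ ^ (2 * r)) =
        lam ^ ((i : ℤ) * ((p : ℤ) - (q : ℤ))) • (u μ ^ q * v μ ^ p * t μ ^ (2 * r))) :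
    {F : A μ | τ F = F ∧ Sp F = F ∧ Sm F = F} =
      (Algebra.adjoin ℂ
        ({u μ * v μ, u μ ^ m + v μ ^ m, t μ ^ 2} : Set (A μ)) : Set (A μ)) := by
  have hζ : IsPrimitiveRoot lam m := hlam ▸ Complex.isPrimitiveRoot_exp m (by omega)
  ext F
  rw [Set.mem_ofPred_eq, SetLike.mem_coe, ← Subalgebra.mem_toSubmodule,
    ← symSpan_eq_adjoinGens μ m (by omega)]
  exact ⟨fun ⟨hτF, hSpF, hSmF⟩ =>
      mem_symSpan_of_map_eq_self hζ hcop hτu hτv hτt hSp hSm hτF hSpF hSmF,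
    map_eq_self_of_mem_symSpan hζ hcop hτu hτv hτt hSp hSm⟩

open Stmt18 in
theorem stmt_18 (m : ℕ) (hm : 2 ≤ m) (heven : Even m) (lam : ℂ)
    (hlam : lam = Complex.exp (2 * Real.pi * Complex.I / m))
    (i : ℕ) (hipos : 1 ≤ i) (hcop : Nat.gcd i m = 1)
    (μ : ℂ) (hμ : μ = lam ^ i)
    (τ : A μ →ₐ[ℂ] A μ)
    (hτu : τ (u μ) = u μ) (hτv : τ (v μ) = v μ) (hτt : τ (t μ) = -t μ)
    (Sp Sm : A μ →ₗ[ℂ] A μ)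
    (hSp : ∀ p q r : ℕ,
      Sp (u μ ^ p * v μ ^ q * t μ ^ (2 * r)) = u μ ^ q * v μ ^ p * t μ ^ (2 * r))
    (hSm : ∀ p q r : ℕ,
      Sm (u μ ^ p * v μ ^ q * t μ ^ (2 * r)) =
        lam ^ ((i : ℤ) * ((p : ℤ) - (q : ℤ))) • (u μ ^ q * v μ ^ p * t μ ^ (2 * r))) :
    {F : A μ | τ F = F ∧ Sp F = F ∧ Sm F = F} =
      (Algebra.adjoin ℂ
        ({u μ * v μ, u μ ^ m + v μ ^ m, t μ ^ 2} : Set (A μ)) : Set (A μ)) :=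
  stmt_18_general m hm lam hlam i hcop μ τ hτu hτv hτt Sp Sm hSp hSm

end
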